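/- arXiv:2405.05152 — 2 statements merged into one kernel-verified Lean document; each statement's English description precedes it below -/
import Mathlib

section
/- First Barnes Lemma: for complex numbers a₁, a₂, b₁, b₂ with positive real parts, (1/(2π)) ∫_{ℝ} Γ(a₁ - iγ)Γ(a₂ - iγ)Γ(b₁ + iγ)Γ(b₂ + iγ) dγ = Γ(a₁+b₁)Γ(a₁+b₂)Γ(a₂+b₁)Γ(a₂+b₂) / Γ(a₁+a₂+b₁+b₂). -/
/-!
Put `K_{a,b}(x) = x ^ b (1 + x) ^ (-(a + b))`. Euler's Beta integral, after the substitution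
`x = t / (1 - t)`, shows that the Mellin transform of `K_{a,b}` is `Γ(b + s) Γ(a - s) / Γ(a + b)`.
Hence the integrand is `Γ(a₁ + b₁) Γ(a₂ + b₂)` times the product of the Mellin transforms of
`K_{a₁,b₁}` and `K_{a₂,b₂}` on the imaginary axis. Expanding the second one as an integral,
exchanging the integrals and applying Mellin inversion to the first one gives the Parseval formula
`∫ M₁(iγ) M₂(iγ) dγ = 2π ∫₀^∞ K_{a₁,b₁}(1/x) K_{a₂,b₂}(x) dx / x`, and the right-hand side is
again a Beta integral, equal to `2π Γ(a₁ + b₂) Γ(a₂ + b₁) / Γ(a₁ + a₂ + b₁ + b₂)`.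

Mellin inversion needs the Mellin transform to be integrable on the imaginary axis. In the
variable `x = e^{-u}` it is the Fourier transform of `u ↦ K_{a,b}(e^{-u})`, whose derivatives are
combinations of the functions `u ↦ K_{a,b+n}(e^{-u})`; these are integrable, so the Fourier
transform decays like `1 / γ²`.
-/

open MeasureTheory Real Set
open scoped FourierTransform

lemma ofReal_cpow_eq_exp {r : ℝ} (hr : 0 < r) (w : ℂ) :
    (r : ℂ) ^ w = Complex.exp (w * Real.log r) := by
  rw [Complex.cpow_def_of_ne_zero (Complex.ofReal_ne_zero.mpr hr.ne'), ← Complex.ofReal_log hr.le,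
    mul_comm]

section BetaIntegral

lemma injOn_div_one_sub : InjOn (fun t : ℝ => t / (1 - t)) (Ioo 0 1) := by
  intro s hs t ht h
  have : 1 - s ≠ 0 := by linarith [hs.2]
  have : 1 - t ≠ 0 := by linarith [ht.2]
  field_simp at h
  linarith

lemma image_div_one_sub_Ioo : (fun t : ℝ => t / (1 - t)) '' Ioo 0 1 = Ioi 0 := by
  ext x
  constructor
  · rintro ⟨t, ht, rfl⟩
    exact div_pos ht.1 (by linarith [ht.2])
  · intro (hx : 0 < x)
    refine ⟨x / (1 + x), ⟨by positivity, (div_lt_one (by positivity)).mpr (by linarith)⟩, ?_⟩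
    field_simp
    ring

lemma hasDerivWithinAt_div_one_sub {t : ℝ} (ht : t ∈ Ioo (0 : ℝ) 1) :
    HasDerivWithinAt (fun t : ℝ => t / (1 - t)) ((1 - t) ^ 2)⁻¹ (Ioo 0 1) t := by
  have h : 1 - t ≠ 0 := by linarith [ht.2]
  refine ((hasDerivAt_id t).div ((hasDerivAt_id t).const_sub 1) h).hasDerivWithinAt.congr_deriv ?_
  simp only [id]
  field_simp
  ring

lemma abs_deriv_smul_mellin_one_add_cpow_neg {s w : ℂ} {t : ℝ} (ht : t ∈ Ioo (0 : ℝ) 1) :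
    |((1 - t) ^ 2)⁻¹| • (((t / (1 - t) : ℝ) : ℂ) ^ (s - 1) • ((1 + t / (1 - t) : ℝ) : ℂ) ^ (-w))
      = (t : ℂ) ^ (s - 1) * (1 - (t : ℂ)) ^ (w - s - 1) := by
  obtain ⟨ht0, ht1⟩ := ht
  have h1t : 0 < 1 - t := by linarith
  have hsum : 1 + t / (1 - t) = (1 - t)⁻¹ := by field_simp; ring
  have hjac : |((1 - t) ^ 2)⁻¹| = Real.exp (-2 * Real.log (1 - t)) := by
    rw [abs_of_pos (by positivity), ← Real.rpow_natCast, ← Real.rpow_neg h1t.le,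
      Real.rpow_def_of_pos h1t]
    push_cast; ring_nf
  rw [show (1 - (t : ℂ)) = ((1 - t : ℝ) : ℂ) by push_cast; rfl, hsum, hjac,
    ofReal_cpow_eq_exp (div_pos ht0 h1t), ofReal_cpow_eq_exp (inv_pos.mpr h1t),
    ofReal_cpow_eq_exp ht0, ofReal_cpow_eq_exp h1t, Real.log_div ht0.ne' h1t.ne', Real.log_inv,
    Complex.real_smul, smul_eq_mul, Complex.ofReal_exp, ← Complex.exp_add, ← Complex.exp_add,
    ← Complex.exp_add]
  congr 1
  push_cast
  ring

theorem hasMellin_one_add_cpow_neg {s w : ℂ} (hs : 0 < s.re) (hsw : s.re < w.re) :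
    HasMellin (fun x : ℝ => ((1 + x : ℝ) : ℂ) ^ (-w)) s
      (Complex.Gamma s * Complex.Gamma (w - s) / Complex.Gamma w) := by
  have hws : 0 < (w - s).re := by rw [Complex.sub_re]; linarith
  have hbeta := Complex.betaIntegral_convergent hs hws
  rw [intervalIntegrable_iff_integrableOn_Ioo_of_le zero_le_one] at hbeta
  have hint := Complex.betaIntegral_eq_Gamma_mul_div s (w - s) hs hws
  rw [Complex.betaIntegral, intervalIntegral.integral_of_le zero_le_one,
    integral_Ioc_eq_integral_Ioo, add_sub_cancel] at hint
  constructor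
  · rw [MellinConvergent, ← image_div_one_sub_Ioo,
      integrableOn_image_iff_integrableOn_abs_deriv_smul measurableSet_Ioo
        (fun t ht => hasDerivWithinAt_div_one_sub ht) injOn_div_one_sub]
    exact hbeta.congr_fun (fun t ht => (abs_deriv_smul_mellin_one_add_cpow_neg ht).symm)
      measurableSet_Ioo
  · rw [mellin, ← image_div_one_sub_Ioo, integral_image_eq_integral_abs_deriv_smul
      measurableSet_Ioo (fun t ht => hasDerivWithinAt_div_one_sub ht) injOn_div_one_sub, ← hint]
    exact setIntegral_congr_fun measurableSet_Ioo
      (fun t ht => abs_deriv_smul_mellin_one_add_cpow_neg ht)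

end BetaIntegral

section MellinInversion

theorem integrable_fourier_of_hasDerivAt {E : Type*} [NormedAddCommGroup E] [NormedSpace ℂ E]
    {f f' f'' : ℝ → E} (hf : Integrable f) (hf' : Integrable f') (hf'' : Integrable f'')
    (h₁ : ∀ x, HasDerivAt f (f' x) x) (h₂ : ∀ x, HasDerivAt f' (f'' x) x) :
    Integrable (𝓕 f) := by
  have hderiv₁ : deriv f = f' := funext fun x => (h₁ x).deriv
  have hderiv₂ : deriv f' = f'' := funext fun x => (h₂ x).deriv
  have hfourier₂ : ∀ ξ : ℝ,
      𝓕 f'' ξ = (2 * π * Complex.I * ξ) • (2 * π * Complex.I * ξ) • 𝓕 f ξ := by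
    intro ξ
    rw [← hderiv₂, Real.fourier_deriv hf' (fun x => (h₂ x).differentiableAt) (hderiv₂ ▸ hf''),
      ← hderiv₁, Real.fourier_deriv hf (fun x => (h₁ x).differentiableAt) (hderiv₁ ▸ hf')]
  set C := (∫ x, ‖f x‖) + ∫ x, ‖f'' x‖
  have hbound : ∀ ξ : ℝ, ‖𝓕 f ξ‖ ≤ C * (1 + (2 * π * ξ) ^ 2)⁻¹ := by
    intro ξ
    have h₀ : ‖𝓕 f ξ‖ ≤ ∫ x, ‖f x‖ :=
      VectorFourier.norm_fourierIntegral_le_integral_norm _ _ _ _ _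
    have h₂ : (2 * π * ξ) ^ 2 * ‖𝓕 f ξ‖ ≤ ∫ x, ‖f'' x‖ :=
      calc (2 * π * ξ) ^ 2 * ‖𝓕 f ξ‖ = ‖𝓕 f'' ξ‖ := by
            rw [hfourier₂, norm_smul, norm_smul]
            simp only [norm_mul, Complex.norm_I, Complex.norm_real, Real.norm_eq_abs,
              Complex.norm_two, mul_one, abs_of_pos pi_pos]
            rw [mul_pow, ← sq_abs ξ]
            ring
        _ ≤ ∫ x, ‖f'' x‖ := VectorFourier.norm_fourierIntegral_le_integral_norm _ _ _ _ _
    rw [← div_eq_mul_inv, le_div_iff₀ (by positivity)]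
    linarith
  refine ((integrable_inv_one_add_sq.comp_mul_left' two_pi_pos.ne').const_mul C).mono'
    (VectorFourier.fourierIntegral_continuous Real.continuous_fourierChar continuous_inner hf
      ).aestronglyMeasurable (ae_of_all _ hbound)

theorem mellinConvergent_zero_iff_integrable_comp_exp_neg {E : Type*} [NormedAddCommGroup E]
    [NormedSpace ℂ E] {f : ℝ → E} :
    MellinConvergent f 0 ↔ Integrable (fun u => f (rexp (-u))) := by
  have himage : (rexp ∘ Neg.neg) '' univ = Ioi 0 := by
    rw [image_comp, image_univ_of_surjective neg_surjective, image_univ, Real.range_exp]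
  have hderiv : ∀ u ∈ univ, HasDerivWithinAt (rexp ∘ Neg.neg) (-rexp (-u)) univ u := fun u _ =>
    (((Real.hasDerivAt_exp (-u)).comp u (hasDerivAt_neg u)).congr_deriv
      (mul_neg_one _)).hasDerivWithinAt
  rw [MellinConvergent, ← himage, integrableOn_image_iff_integrableOn_abs_deriv_smul
    MeasurableSet.univ hderiv (Real.exp_injective.comp neg_injective).injOn, integrableOn_univ]
  refine integrable_congr (ae_of_all _ fun u => ?_)
  simp only [Function.comp_apply, zero_sub, Complex.cpow_neg_one, abs_neg, abs_of_pos (exp_pos _)]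
  rw [← Complex.coe_smul, smul_smul, ← Complex.ofReal_inv, ← Complex.ofReal_mul,
    mul_inv_cancel₀ (exp_pos _).ne', Complex.ofReal_one, one_smul]

variable {f g : ℝ → ℂ}

lemma integral_cpow_mul_mellin (hf : MellinConvergent f 0)
    (hFf : Complex.VerticalIntegrable (mellin f) 0) {x : ℝ} (hx : 0 < x)
    (hfx : ContinuousAt f x⁻¹) :
    ∫ γ : ℝ, (x : ℂ) ^ ((γ : ℂ) * Complex.I) * mellin f (γ * Complex.I) = 2 * π * f x⁻¹ := by
  have hinv := mellinInv_mellin_eq 0 f (inv_pos.mpr hx) (by simpa using hf) hFf hfx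
  have hcpow : ∀ γ : ℝ, ((x⁻¹ : ℝ) : ℂ) ^ (-((γ : ℂ) * Complex.I))
      = (x : ℂ) ^ ((γ : ℂ) * Complex.I) := fun γ => by
    rw [ofReal_cpow_eq_exp (inv_pos.mpr hx), ofReal_cpow_eq_exp hx, Real.log_inv]
    push_cast
    ring_nf
  simp only [mellinInv, Complex.ofReal_zero, zero_add, smul_eq_mul, hcpow] at hinv
  have h2π : (2 * π : ℂ) ≠ 0 := by exact_mod_cast two_pi_pos.ne'
  rw [← hinv, Complex.real_smul, ← mul_assoc]
  push_cast
  rw [mul_one_div_cancel h2π, one_mul]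

lemma integrable_mellin_mul_mellin_integrand
    (hFf : Complex.VerticalIntegrable (mellin f) 0) (hg : MellinConvergent g 0) :
    Integrable (fun z : ℝ × ℝ => mellin f (z.1 * Complex.I) *
        ((z.2 : ℂ) ^ ((z.1 : ℂ) * Complex.I) * ((z.2 : ℂ) ^ ((0 : ℂ) - 1) • g z.2)))
      (volume.prod (volume.restrict (Ioi 0))) := by
  have hF : Integrable (fun γ : ℝ => mellin f (γ * Complex.I)) := by
    simpa [Complex.VerticalIntegrable] using hFf
  have hpos : ∀ᵐ z : ℝ × ℝ ∂(volume.prod (volume.restrict (Ioi 0))), 0 < z.2 :=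
    Measure.quasiMeasurePreserving_snd.ae (ae_restrict_mem measurableSet_Ioi)
  refine (hF.norm.mul_prod hg.norm).mono' ?_ ?_
  · refine hF.aestronglyMeasurable.comp_fst.mul (Measurable.aestronglyMeasurable ?_ |>.mul
      hg.aestronglyMeasurable.comp_snd)
    fun_prop
  · filter_upwards [hpos] with z hz
    rw [norm_mul, norm_mul, Complex.norm_cpow_eq_rpow_re_of_pos hz]
    simp

theorem integral_mellin_mul_mellin (hf : MellinConvergent f 0)
    (hFf : Complex.VerticalIntegrable (mellin f) 0) (hfc : ∀ x ∈ Ioi (0 : ℝ), ContinuousAt f x)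
    (hg : MellinConvergent g 0) :
    ∫ γ : ℝ, mellin f (γ * Complex.I) * mellin g (γ * Complex.I)
      = 2 * π * ∫ x in Ioi (0 : ℝ), f x⁻¹ * g x / x := by
  have hmellin_g : ∀ γ : ℝ, mellin g (γ * Complex.I) = ∫ x in Ioi (0 : ℝ),
      (x : ℂ) ^ ((γ : ℂ) * Complex.I) * ((x : ℂ) ^ ((0 : ℂ) - 1) • g x) := fun γ =>
    setIntegral_congr_fun measurableSet_Ioi fun x (hx : 0 < x) => by
      rw [smul_eq_mul, smul_eq_mul, ← mul_assoc,
        ← Complex.cpow_add _ _ (Complex.ofReal_ne_zero.mpr hx.ne'), add_zero_sub]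
  have hinner : ∀ x ∈ Ioi (0 : ℝ), ∫ γ : ℝ, mellin f (γ * Complex.I) *
      ((x : ℂ) ^ ((γ : ℂ) * Complex.I) * ((x : ℂ) ^ ((0 : ℂ) - 1) • g x))
      = 2 * π * (f x⁻¹ * g x / x) := fun x (hx : 0 < x) => by
    simp_rw [← mul_assoc, mul_comm (mellin f _)]
    rw [integral_mul_const, integral_cpow_mul_mellin hf hFf hx (hfc _ (inv_pos.mpr hx)),
      zero_sub, Complex.cpow_neg_one, smul_eq_mul]
    ring
  calc ∫ γ : ℝ, mellin f (γ * Complex.I) * mellin g (γ * Complex.I)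
      = ∫ γ : ℝ, ∫ x in Ioi (0 : ℝ), mellin f (γ * Complex.I) *
          ((x : ℂ) ^ ((γ : ℂ) * Complex.I) * ((x : ℂ) ^ ((0 : ℂ) - 1) • g x)) := by
        simp_rw [hmellin_g, integral_const_mul]
    _ = ∫ x in Ioi (0 : ℝ), ∫ γ : ℝ, mellin f (γ * Complex.I) *
          ((x : ℂ) ^ ((γ : ℂ) * Complex.I) * ((x : ℂ) ^ ((0 : ℂ) - 1) • g x)) :=
        integral_integral_swap (integrable_mellin_mul_mellin_integrand hFf hg)
    _ = 2 * π * ∫ x in Ioi (0 : ℝ), f x⁻¹ * g x / x := by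
        rw [setIntegral_congr_fun measurableSet_Ioi hinner, integral_const_mul]

end MellinInversion

section BarnesKernel

noncomputable def barnesKernel (a b : ℂ) (x : ℝ) : ℂ :=
  (x : ℂ) ^ b * ((1 + x : ℝ) : ℂ) ^ (-(a + b))

theorem hasMellin_barnesKernel {a b s : ℂ} (hs : 0 < (b + s).re) (hs' : 0 < (a - s).re) :
    HasMellin (barnesKernel a b) s
      (Complex.Gamma (b + s) * Complex.Gamma (a - s) / Complex.Gamma (a + b)) := by
  have h := hasMellin_one_add_cpow_neg (s := b + s) (w := a + b) hs
    (by simp only [Complex.add_re, Complex.sub_re] at hs' ⊢; linarith)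
  rw [show a + b - (b + s) = a - s by ring] at h
  refine ⟨MellinConvergent.cpow_smul.mpr ?_, (mellin_cpow_smul _ _ _).trans ?_⟩ <;>
    rw [add_comm s b]
  exacts [h.1, h.2]

lemma mellinConvergent_barnesKernel_zero {a b : ℂ} (ha : 0 < a.re) (hb : 0 < b.re) :
    MellinConvergent (barnesKernel a b) 0 :=
  (hasMellin_barnesKernel (by simpa using hb) (by simpa using ha)).1

lemma continuousAt_barnesKernel (a b : ℂ) {x : ℝ} (hx : 0 < x) :
    ContinuousAt (barnesKernel a b) x := by
  have hslit : ∀ {y : ℝ}, 0 < y → (y : ℂ) ∈ Complex.slitPlane := Complex.ofReal_mem_slitPlane.mpr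
  exact ((continuousAt_cpow_const (hslit hx)).comp Complex.continuous_ofReal.continuousAt).mul
    ((continuousAt_cpow_const (hslit (by linarith : 0 < 1 + x))).comp
      (f := fun y : ℝ => ((1 + y : ℝ) : ℂ)) (by fun_prop))

lemma barnesKernel_exp_neg (a b : ℂ) (u : ℝ) :
    barnesKernel a b (rexp (-u))
      = Complex.exp (-(b * u) - (a + b) * Real.log (1 + rexp (-u))) := by
  rw [barnesKernel, ofReal_cpow_eq_exp (exp_pos _), ofReal_cpow_eq_exp (by positivity),
    Real.log_exp, ← Complex.exp_add]
  congr 1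
  push_cast
  ring

lemma hasDerivAt_barnesKernel_exp_neg (a b : ℂ) (u : ℝ) :
    HasDerivAt (fun u => barnesKernel a b (rexp (-u)))
      (-b * barnesKernel a b (rexp (-u)) + (a + b) * barnesKernel a (b + 1) (rexp (-u))) u := by
  have hlog : HasDerivAt (fun u => Real.log (1 + rexp (-u))) (-rexp (-u) / (1 + rexp (-u))) u :=
    ((((Real.hasDerivAt_exp (-u)).comp u (hasDerivAt_neg u)).const_add 1).log
      (by simp only [Function.comp_apply]; positivity)).congr_deriv
        (by simp only [Function.comp_apply]; ring)
  have hφ : HasDerivAt (fun u : ℝ => -(b * u) - (a + b) * (Real.log (1 + rexp (-u)) : ℂ))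
      (-b + (a + b) * (rexp (-u) / (1 + rexp (-u)) : ℝ)) u :=
    (((hasDerivAt_id u).ofReal_comp.const_mul b).neg.sub
      (hlog.ofReal_comp.const_mul (a + b))).congr_deriv (by push_cast; ring)
  have hratio : (rexp (-u) / (1 + rexp (-u)) : ℝ) = rexp (-u - Real.log (1 + rexp (-u))) := by
    rw [Real.exp_sub, Real.exp_log (by positivity)]
  simp_rw [barnesKernel_exp_neg]
  refine hφ.cexp.congr_deriv ?_
  rw [show -((b + 1) * (u : ℂ)) - (a + (b + 1)) * Real.log (1 + rexp (-u))
      = (-(b * u) - (a + b) * Real.log (1 + rexp (-u))) + (-u - Real.log (1 + rexp (-u)) : ℝ) by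
    push_cast; ring, Complex.exp_add, ← Complex.ofReal_exp, ← hratio]
  ring

lemma integrable_barnesKernel_exp_neg {a b : ℂ} (ha : 0 < a.re) (hb : 0 < b.re) :
    Integrable (fun u => barnesKernel a b (rexp (-u))) :=
  mellinConvergent_zero_iff_integrable_comp_exp_neg.mp (mellinConvergent_barnesKernel_zero ha hb)

lemma integrable_fourier_barnesKernel_exp_neg {a b : ℂ} (ha : 0 < a.re) (hb : 0 < b.re) :
    Integrable (𝓕 fun u => barnesKernel a b (rexp (-u))) := by
  have hK₀ := integrable_barnesKernel_exp_neg ha hb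
  have hK₁ := integrable_barnesKernel_exp_neg ha (b := b + 1)
    (by simp only [Complex.add_re, Complex.one_re]; linarith)
  have hK₂ := integrable_barnesKernel_exp_neg ha (b := b + 1 + 1)
    (by simp only [Complex.add_re, Complex.one_re]; linarith)
  have hD := hasDerivAt_barnesKernel_exp_neg a
  have hK' := (hK₀.const_mul (-b)).add (hK₁.const_mul (a + b))
  exact integrable_fourier_of_hasDerivAt hK₀ hK'
    ((hK'.const_mul (-b)).add (((hK₁.const_mul _).add (hK₂.const_mul _)).const_mul (a + b)))
    (hD b) (fun u => ((hD b u).const_mul (-b)).add ((hD (b + 1) u).const_mul (a + b)))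

theorem verticalIntegrable_mellin_barnesKernel {a b : ℂ} (ha : 0 < a.re) (hb : 0 < b.re) :
    Complex.VerticalIntegrable (mellin (barnesKernel a b)) 0 := by
  refine ((integrable_fourier_barnesKernel_exp_neg ha hb).comp_div two_pi_pos.ne').congr
    (ae_of_all _ fun γ => ?_)
  simp [mellin_eq_fourier]

lemma Gamma_mul_Gamma_eq_mellin_barnesKernel {a b : ℂ} (ha : 0 < a.re) (hb : 0 < b.re) (γ : ℝ) :
    Complex.Gamma (a - Complex.I * γ) * Complex.Gamma (b + Complex.I * γ)
      = Complex.Gamma (a + b) * mellin (barnesKernel a b) (γ * Complex.I) := by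
  rw [(hasMellin_barnesKernel (by simpa using hb) (by simpa using ha)).2,
    mul_div_cancel₀ _ (Complex.Gamma_ne_zero_of_re_pos (by rw [Complex.add_re]; positivity)),
    mul_comm, mul_comm (γ : ℂ)]

lemma barnesKernel_inv_mul_barnesKernel_div (a₁ a₂ b₁ b₂ : ℂ) {x : ℝ} (hx : 0 < x) :
    barnesKernel a₁ b₁ x⁻¹ * barnesKernel a₂ b₂ x / x
      = (x : ℂ) ^ (a₁ + b₂ - 1) • ((1 + x : ℝ) : ℂ) ^ (-(a₁ + a₂ + b₁ + b₂)) := by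
  have hlog : Real.log (1 + x⁻¹) = Real.log (1 + x) - Real.log x := by
    rw [show 1 + x⁻¹ = (1 + x) / x by field_simp; ring, Real.log_div (by positivity) hx.ne']
  rw [div_eq_mul_inv, ← Complex.cpow_neg_one, barnesKernel, barnesKernel,
    ofReal_cpow_eq_exp (inv_pos.mpr hx), ofReal_cpow_eq_exp (by positivity), ofReal_cpow_eq_exp hx,
    ofReal_cpow_eq_exp (by positivity), ofReal_cpow_eq_exp hx, ofReal_cpow_eq_exp hx,
    ofReal_cpow_eq_exp (by positivity), Real.log_inv, hlog, smul_eq_mul]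
  simp only [← Complex.exp_add]
  congr 1
  push_cast
  ring

end BarnesKernel

/-- First Barnes Lemma. -/
theorem first_barnes_lemma (a₁ a₂ b₁ b₂ : ℂ)
    (ha₁ : 0 < a₁.re) (ha₂ : 0 < a₂.re) (hb₁ : 0 < b₁.re) (hb₂ : 0 < b₂.re) :
    (1 / (2 * (π : ℂ))) *
      ∫ γ : ℝ, Complex.Gamma (a₁ - Complex.I * γ) * Complex.Gamma (a₂ - Complex.I * γ) *
        Complex.Gamma (b₁ + Complex.I * γ) * Complex.Gamma (b₂ + Complex.I * γ)
    = Complex.Gamma (a₁ + b₁) * Complex.Gamma (a₁ + b₂) *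
        Complex.Gamma (a₂ + b₁) * Complex.Gamma (a₂ + b₂) /
        Complex.Gamma (a₁ + a₂ + b₁ + b₂) := by
  have hintegrand : ∀ γ : ℝ,
      Complex.Gamma (a₁ - Complex.I * γ) * Complex.Gamma (a₂ - Complex.I * γ) *
        Complex.Gamma (b₁ + Complex.I * γ) * Complex.Gamma (b₂ + Complex.I * γ)
      = Complex.Gamma (a₁ + b₁) * Complex.Gamma (a₂ + b₂) *
        (mellin (barnesKernel a₁ b₁) (γ * Complex.I) *
          mellin (barnesKernel a₂ b₂) (γ * Complex.I)) := fun γ => by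
      rw [← mul_mul_mul_comm, ← Gamma_mul_Gamma_eq_mellin_barnesKernel ha₁ hb₁,
        ← Gamma_mul_Gamma_eq_mellin_barnesKernel ha₂ hb₂]
      ring
  have hparseval := integral_mellin_mul_mellin (mellinConvergent_barnesKernel_zero ha₁ hb₁)
    (verticalIntegrable_mellin_barnesKernel ha₁ hb₁) (fun x hx => continuousAt_barnesKernel _ _ hx)
    (mellinConvergent_barnesKernel_zero ha₂ hb₂)
  have hbeta := (hasMellin_one_add_cpow_neg (s := a₁ + b₂) (w := a₁ + a₂ + b₁ + b₂)
    (by simp only [Complex.add_re]; positivity)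
    (by simp only [Complex.add_re]; linarith)).2
  rw [mellin, ← setIntegral_congr_fun measurableSet_Ioi
      (fun x hx => barnesKernel_inv_mul_barnesKernel_div a₁ a₂ b₁ b₂ hx),
    show a₁ + a₂ + b₁ + b₂ - (a₁ + b₂) = a₂ + b₁ by ring] at hbeta
  simp_rw [hintegrand]
  rw [integral_const_mul, hparseval, hbeta]
  have hπ : (π : ℂ) ≠ 0 := Complex.ofReal_ne_zero.mpr pi_ne_zero
  field_simp
end

section
/- Fourier transform of the gl₂ Givental integrand: for real γ₁, γ₂ and real p, (1/√(2π)) ∫_{ℝ} dT e^{i(γ₁−γ₂)T − e^T} ∫_{ℝ} du e^{(i(γ₂−p)+1/2)u − e^{u−T}} = (1/√(2π)) Γ(i(γ₁−p) + 1/2) Γ(i(γ₂−p) + 1/2). -/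
open MeasureTheory Real Set

/-! Substituting `t = exp x` turns Euler's integral into `Γ z = ∫_ℝ exp (z x - exp x) dx`.
Shifting `u ↦ u + T` shows the inner integral equals `exp (z T) Γ z` with `z = i(γ₂ - p) + 1/2`;
this factor combines with the outer integrand to give Euler's integral again, now at
`i(γ₁ - p) + 1/2`. -/

theorem integral_Ioi_zero_eq_integral_exp_smul_comp_exp {E : Type*} [NormedAddCommGroup E]
    [NormedSpace ℝ E] (f : ℝ → E) :
    ∫ x in Ioi 0, f x = ∫ x, Real.exp x • f (Real.exp x) := by
  rw [← Real.range_exp, ← image_univ, integral_image_eq_integral_abs_deriv_smul MeasurableSet.univ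
      (fun x _ ↦ (hasDerivAt_exp x).hasDerivWithinAt) exp_injective.injOn, setIntegral_univ]
  simp_rw [abs_of_pos (exp_pos _)]

namespace Complex

theorem integral_exp_mul_sub_exp {z : ℂ} (hz : 0 < z.re) :
    ∫ x : ℝ, cexp (z * x - cexp x) = Gamma z := by
  rw [Gamma_eq_integral hz, GammaIntegral, integral_Ioi_zero_eq_integral_exp_smul_comp_exp]
  congr 1 with x
  push_cast
  rw [cpow_def_of_ne_zero (exp_ne_zero _), log_exp (by simp [pi_pos]) (by simp [pi_pos.le]),
    ← exp_add, real_smul, ofReal_exp, ← exp_add]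
  ring_nf

theorem integral_exp_mul_sub_exp_sub {z : ℂ} (hz : 0 < z.re) (T : ℝ) :
    ∫ u : ℝ, cexp (z * u - cexp (u - T)) = cexp (z * T) * Gamma z := by
  rw [← integral_add_right_eq_self _ T, ← integral_exp_mul_sub_exp hz, ← integral_const_mul]
  congr 1 with u
  rw [← exp_add]
  push_cast
  ring_nf

end Complex

/-- Fourier transform of the gl₂ Givental integrand. -/
theorem gl2_givental_fourier (γ₁ γ₂ p : ℝ) :
    (1 / (Real.sqrt (2 * π) : ℂ)) *
      ∫ T : ℝ, Complex.exp (Complex.I * (γ₁ - γ₂) * T - Complex.exp (T : ℂ)) *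
        ∫ u : ℝ, Complex.exp ((Complex.I * (γ₂ - p) + 1/2) * u - Complex.exp ((u : ℂ) - T))
    = (1 / (Real.sqrt (2 * π) : ℂ)) *
        (Complex.Gamma (Complex.I * (γ₁ - p) + 1/2) *
          Complex.Gamma (Complex.I * (γ₂ - p) + 1/2)) := by
  have re_pos (a b : ℝ) : 0 < (Complex.I * (a - b) + 1 / 2).re := by simp
  simp_rw [Complex.integral_exp_mul_sub_exp_sub (re_pos γ₂ p)]
  rw [← Complex.integral_exp_mul_sub_exp (re_pos γ₁ p), ← integral_mul_const]
  congr 2 with T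
  rw [← mul_assoc, ← Complex.exp_add]
  ring_nf
end
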